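/- arXiv:2312.00088 — 3 statements merged into one kernel-verified Lean document; each statement's English description precedes it below -/
import Mathlib

section
/- For any probability vector π in [0,1]^M with entries summing to 1, the function L(π) = Σ_i π_i log(π_i/(1-π_i)) is minimized uniquely at the uniform distribution π = (1/M,...,1/M), assuming M ≥ 2. -/
open Real Finset

/-!
Every summand of `L` is `f (π i)` with `f x = x * log (x / (1 - x))`, and on `[0, 1)` we have
`f x = -binEntropy x - log (1 - x)`, a strictly concave function negated plus a convex one. So `f`
is strictly convex, and Jensen's inequality with uniform weights gives `M * f (1 / M) ≤ L(π)`, with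
equality exactly when every `π i` equals the mean `1 / M`.
-/

section UniformJensen

variable {𝕜 E ι : Type*} [Field 𝕜] [LinearOrder 𝕜] [IsStrictOrderedRing 𝕜]
  [AddCommGroup E] [Module 𝕜 E] [Fintype ι] [Nonempty ι] {s : Set E} {f : E → 𝕜} {p : ι → E}

theorem ConvexOn.card_mul_map_avg_le_sum (hf : ConvexOn 𝕜 s f) (hp : ∀ i, p i ∈ s) :
    Fintype.card ι * f ((Fintype.card ι : 𝕜)⁻¹ • ∑ i, p i) ≤ ∑ i, f (p i) := by
  have hcard : (0 : 𝕜) < Fintype.card ι := by exact_mod_cast Fintype.card_pos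
  have := hf.map_sum_le (t := univ) (w := fun _ => (Fintype.card ι : 𝕜)⁻¹)
    (fun _ _ => by positivity) (by simp [hcard.ne']) (fun i _ => hp i)
  rw [← smul_sum, ← smul_sum, smul_eq_mul] at this
  exact (le_inv_mul_iff₀ hcard).1 this

theorem StrictConvexOn.sum_map_eq_card_mul_map_avg_iff (hf : StrictConvexOn 𝕜 s f)
    (hp : ∀ i, p i ∈ s) :
    ∑ i, f (p i) = Fintype.card ι * f ((Fintype.card ι : 𝕜)⁻¹ • ∑ i, p i) ↔
      ∀ i, p i = (Fintype.card ι : 𝕜)⁻¹ • ∑ j, p j := by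
  have hcard : (0 : 𝕜) < Fintype.card ι := by exact_mod_cast Fintype.card_pos
  have := hf.map_sum_eq_iff_of_pos (t := univ) (w := fun _ => (Fintype.card ι : 𝕜)⁻¹)
    (fun _ _ => by positivity) (by simp [hcard.ne']) (fun i _ => hp i)
  rw [← smul_sum, ← smul_sum, smul_eq_mul, eq_inv_mul_iff_mul_eq₀ hcard.ne', eq_comm] at this
  rw [this]
  refine ⟨fun h i => ?_, fun h j _ k _ => (h j).trans (h k).symm⟩
  rw [sum_congr rfl fun j _ => h (mem_univ j) (mem_univ i), sum_const, card_univ,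
    ← Nat.cast_smul_eq_nsmul 𝕜, smul_smul, inv_mul_cancel₀ hcard.ne', one_smul]

end UniformJensen

theorem convexOn_neg_log_one_sub : ConvexOn ℝ (Set.Iio 1) fun x => -log (1 - x) := by
  have h := strictConcaveOn_log_Ioi.concaveOn.neg.comp_affineMap
    (AffineMap.const ℝ ℝ (1 : ℝ) - AffineMap.id ℝ ℝ)
  exact (h.subset (fun x hx => by simpa using hx) (convex_Iio 1)).congr fun x _ => rfl

theorem strictConvexOn_mul_log_div_one_sub :
    StrictConvexOn ℝ (Set.Ico 0 1) fun x => x * log (x / (1 - x)) := by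
  refine ((strictConcave_binEntropy.neg.subset Set.Ico_subset_Icc_self
    (convex_Ico 0 1)).add_convexOn (convexOn_neg_log_one_sub.subset (fun x hx => hx.2)
    (convex_Ico 0 1))).congr fun x ⟨hx0, hx1⟩ => ?_
  show -binEntropy x + -log (1 - x) = _
  rcases hx0.eq_or_lt with rfl | hx0
  · simp
  · rw [binEntropy, log_inv, log_inv, log_div hx0.ne' (sub_pos.2 hx1).ne']
    ring

theorem stmt_0_general (M : ℕ) (pv : Fin M → ℝ)
    (h0 : ∀ i, 0 ≤ pv i) (h1 : ∀ i, pv i < 1) (hs : ∑ i, pv i = 1) :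
    (∑ i : Fin M, (1 / M : ℝ) * Real.log ((1 / M) / (1 - 1 / M))) ≤
      ∑ i, pv i * Real.log (pv i / (1 - pv i)) ∧
    ((∑ i, pv i * Real.log (pv i / (1 - pv i)) =
        ∑ i : Fin M, (1 / M : ℝ) * Real.log ((1 / M) / (1 - 1 / M))) ↔
      pv = fun _ => (1 : ℝ) / M) := by
  have : Nonempty (Fin M) := by
    by_contra h
    simp [not_nonempty_iff.1 h] at hs
  have hmem : ∀ i, pv i ∈ Set.Ico (0 : ℝ) 1 := fun i => ⟨h0 i, h1 i⟩
  have havg : (Fintype.card (Fin M) : ℝ)⁻¹ • ∑ i, pv i = 1 / M := by simp [hs]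
  have huniform : (∑ i : Fin M, (1 / M : ℝ) * log ((1 / M) / (1 - 1 / M))) =
      Fintype.card (Fin M) * ((1 / M : ℝ) * log ((1 / M) / (1 - 1 / M))) := by simp
  rw [huniform, funext_iff, ← havg]
  exact ⟨strictConvexOn_mul_log_div_one_sub.convexOn.card_mul_map_avg_le_sum hmem,
    strictConvexOn_mul_log_div_one_sub.sum_map_eq_card_mul_map_avg_iff hmem⟩

theorem stmt_0 (M : ℕ) (hM : 2 ≤ M) (pv : Fin M → ℝ)
    (h0 : ∀ i, 0 ≤ pv i) (h1 : ∀ i, pv i < 1) (hs : ∑ i, pv i = 1) :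
    (∑ i : Fin M, (1 / M : ℝ) * Real.log ((1 / M) / (1 - 1 / M))) ≤
      ∑ i, pv i * Real.log (pv i / (1 - pv i)) ∧
    ((∑ i, pv i * Real.log (pv i / (1 - pv i)) =
        ∑ i : Fin M, (1 / M : ℝ) * Real.log ((1 / M) / (1 - 1 / M))) ↔
      pv = fun _ => (1 : ℝ) / M) :=
  stmt_0_general M pv h0 h1 hs
end

section
/- For any probability vector π in [0,1]^M summing to 1, L(π) ≥ L((1/M)·1), i.e., L(π) - L((1/M)1) = Σ_i π_i log(π_i(M-1)/(1-π_i)) ≥ 0. -/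
/-!
With `q i = (1 - π i) / (M - 1)` the sum is `∑ π i * log (π i / q i)`, and `q` is again a
probability vector since `∑ (1 - π i) = M - 1`. So the claim is Gibbs' inequality, which follows
termwise from `log x ≤ x - 1`.
-/

open Real Finset

theorem Real.sub_le_mul_log_div {p q : ℝ} (hp : 0 ≤ p) (hq : 0 < q) :
    p - q ≤ p * log (p / q) := by
  have h := self_sub_one_le_mul_log (div_nonneg hp hq.le)
  calc p - q = q * (p / q - 1) := by field_simp
    _ ≤ q * (p / q * log (p / q)) := mul_le_mul_of_nonneg_left h hq.le
    _ = p * log (p / q) := by field_simp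

theorem Real.sum_mul_log_div_nonneg {ι : Type*} (s : Finset ι) {p q : ι → ℝ}
    (hp : ∀ i ∈ s, 0 ≤ p i) (hq : ∀ i ∈ s, 0 < q i) (hpq : ∑ i ∈ s, q i ≤ ∑ i ∈ s, p i) :
    0 ≤ ∑ i ∈ s, p i * log (p i / q i) :=
  calc 0 ≤ ∑ i ∈ s, (p i - q i) := by rw [sum_sub_distrib]; linarith
    _ ≤ _ := sum_le_sum fun i hi ↦ sub_le_mul_log_div (hp i hi) (hq i hi)

theorem stmt_1 (M : ℕ) (hM : 2 ≤ M) (pv : Fin M → ℝ)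
    (h0 : ∀ i, 0 ≤ pv i) (h1 : ∀ i, pv i < 1) (hs : ∑ i, pv i = 1) :
    0 ≤ ∑ i, pv i * Real.log (pv i * (M - 1) / (1 - pv i)) := by
  have hM1 : (0 : ℝ) < M - 1 := by
    have : (2 : ℝ) ≤ M := by exact_mod_cast hM
    linarith
  have hq_sum : ∑ i, (1 - pv i) / ((M : ℝ) - 1) = 1 := by
    rw [← sum_div, sum_sub_distrib, hs]
    simp [hM1.ne']
  simp_rw [← div_div_eq_mul_div]
  exact sum_mul_log_div_nonneg _ (fun i _ ↦ h0 i)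
    (fun i _ ↦ div_pos (sub_pos.2 (h1 i)) hM1) (by rw [hq_sum, hs])
end

section
/- If M ≥ 2 and π is a probability vector of length M with all entries strictly less than 1, then L(π) ≥ log(1/(M-1)) = -log(M-1). -/
/-!
With `q i = (1 - π i) / (M - 1)`, which is again a probability vector, one has
`L(π) = ∑ π i log (π i / q i) - log (M - 1)`, and the first sum is a Kullback–Leibler
divergence, hence nonnegative by Gibbs' inequality.
-/

open Real Finset

theorem Real.sum_sub_sum_le_sum_mul_log_div {ι : Type*} (s : Finset ι) {p q : ι → ℝ}
    (hp : ∀ i ∈ s, 0 ≤ p i) (hq : ∀ i ∈ s, 0 < q i) :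
    ∑ i ∈ s, p i - ∑ i ∈ s, q i ≤ ∑ i ∈ s, p i * log (p i / q i) := by
  rw [← sum_sub_distrib]
  exact sum_le_sum fun i hi => sub_le_mul_log_div (hp i hi) (hq i hi)

theorem Real.mul_log_div_div (p r : ℝ) {c : ℝ} (hr : r ≠ 0) (hc : c ≠ 0) :
    p * log (p / (r / c)) = p * log (p / r) + p * log c := by
  rcases eq_or_ne p 0 with rfl | hp
  · simp
  rw [div_div_eq_mul_div, mul_div_right_comm, log_mul (by positivity) hc, mul_add]

theorem stmt_6 (M : ℕ) (hM : 2 ≤ M) (pv : Fin M → ℝ)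
    (h0 : ∀ i, 0 ≤ pv i) (h1 : ∀ i, pv i < 1) (hs : ∑ i, pv i = 1) :
    -Real.log (M - 1) ≤ ∑ i, pv i * Real.log (pv i / (1 - pv i)) := by
  have hc : (0 : ℝ) < M - 1 := by
    have : (2 : ℝ) ≤ M := by exact_mod_cast hM
    linarith
  set q : Fin M → ℝ := fun i => (1 - pv i) / (M - 1)
  have hq_pos : ∀ i, 0 < q i := fun i => div_pos (sub_pos.2 (h1 i)) hc
  have hq_sum : ∑ i, q i = 1 := by
    simp only [q, ← sum_div, sum_sub_distrib, hs, sum_const, card_univ, Fintype.card_fin,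
      nsmul_eq_mul, mul_one]
    exact div_self hc.ne'
  have hsplit : ∑ i, pv i * log (pv i / q i)
      = ∑ i, pv i * log (pv i / (1 - pv i)) + log (M - 1) := by
    simp only [q, mul_log_div_div _ _ (sub_pos.2 (h1 _)).ne' hc.ne', sum_add_distrib,
      ← sum_mul, hs, one_mul]
  have hgibbs := sum_sub_sum_le_sum_mul_log_div univ (fun i _ => h0 i) (fun i _ => hq_pos i)
  rw [hs, hq_sum, sub_self, hsplit] at hgibbs
  linarith
end
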